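/- Let n ≥ 2 and fix a matrix V ∈ ℝ^{n×(n−1)} satisfying Vᵀ·1 = 0 and Vᵀ V = I_{n−1}. Then a matrix P ∈ ℝ^{n×n} satisfies both Pᵀ P = I and P·1 = Pᵀ·1 = 1 if and only if there exists an orthogonal matrix Q ∈ ℝ^{(n−1)×(n−1)} (i.e., Qᵀ Q = I_{n−1}) such that P = (1/n)·1 1ᵀ + V Q Vᵀ. That is, O_n ∩ E_n = {(1/n)·1 1ᵀ + V Q Vᵀ : Q ∈ O_{n−1}}. -/

import Mathlib

/-!
With `J = (1/n)·1 1ᵀ`, the hypotheses on `V` say that its columns together with `1/√n` form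
an orthonormal basis, i.e. `V Vᵀ = 1 - J`: indeed `1 - J - V Vᵀ` is a symmetric idempotent of
trace `n - 1 - (n - 1) = 0`. An orthogonal `P` with unit row and column sums satisfies
`J P = P J = J`, hence `P = J + (1 - J) P (1 - J) = J + V (Vᵀ P V) Vᵀ`, and `Vᵀ P V` is
orthogonal. Conversely `J + V Q Vᵀ` is orthogonal because `J V = 0`.
-/

open Matrix

noncomputable def onesProj (ι : Type*) [Fintype ι] : Matrix ι ι ℝ :=
  (Fintype.card ι : ℝ)⁻¹ • vecMulVec 1 1

section OnesProj

variable {ι κ : Type*} [Fintype ι]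

theorem onesProj_transpose : (onesProj ι)ᵀ = onesProj ι := by
  rw [onesProj, transpose_smul, transpose_vecMulVec]

theorem onesProj_mul (A : Matrix ι κ ℝ) :
    onesProj ι * A = (Fintype.card ι : ℝ)⁻¹ • vecMulVec 1 (1 ᵥ* A) := by
  rw [onesProj, smul_mul, vecMulVec_mul]

theorem onesProj_mul_eq_zero {A : Matrix ι κ ℝ} (hA : 1 ᵥ* A = 0) : onesProj ι * A = 0 := by
  simp [onesProj_mul, hA]

theorem onesProj_mul_eq_self {A : Matrix ι ι ℝ} (hA : 1 ᵥ* A = 1) :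
    onesProj ι * A = onesProj ι := by
  rw [onesProj_mul, hA, onesProj]

theorem mul_onesProj_eq_self {A : Matrix ι ι ℝ} (hA : A *ᵥ 1 = 1) :
    A * onesProj ι = onesProj ι := by
  rw [← transpose_transpose (A * _), transpose_mul, onesProj_transpose,
    onesProj_mul_eq_self (by rwa [vecMul_transpose]), onesProj_transpose]

theorem onesProj_mulVec_one : onesProj ι *ᵥ 1 = 1 := by
  cases isEmpty_or_nonempty ι
  · exact Subsingleton.elim _ _
  · ext
    simp [onesProj, mulVec, dotProduct, vecMulVec]

theorem one_vecMul_onesProj : 1 ᵥ* onesProj ι = 1 := by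
  rw [← mulVec_transpose, onesProj_transpose, onesProj_mulVec_one]

theorem onesProj_mul_self : onesProj ι * onesProj ι = onesProj ι :=
  onesProj_mul_eq_self one_vecMul_onesProj

theorem trace_onesProj [Nonempty ι] : trace (onesProj ι) = 1 := by
  rw [onesProj, trace_smul, trace_vecMulVec, dotProduct_one]
  simp

end OnesProj

theorem eq_zero_of_transpose_eq_of_mul_self_eq_of_trace_eq_zero {ι : Type*} [Fintype ι]
    {N : Matrix ι ι ℝ} (hsymm : Nᵀ = N) (hidem : N * N = N) (htr : trace N = 0) : N = 0 := by
  rw [← trace_conjTranspose_mul_self_eq_zero_iff, conjTranspose_eq_transpose_of_trivial, hsymm,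
    hidem, htr]

theorem mul_transpose_eq_one_sub_onesProj {ι κ : Type*} [Fintype ι] [DecidableEq ι] [Fintype κ]
    [DecidableEq κ] {V : Matrix ι κ ℝ} (hV1 : 1 ᵥ* V = 0) (hV2 : Vᵀ * V = 1)
    (hcard : Fintype.card κ + 1 = Fintype.card ι) : V * Vᵀ = 1 - onesProj ι := by
  have : Nonempty ι := Fintype.card_pos_iff.mp (by omega)
  have hJV : onesProj ι * V = 0 := onesProj_mul_eq_zero hV1
  have hVVJ : V * Vᵀ * onesProj ι = 0 := by
    rw [Matrix.mul_assoc, ← onesProj_transpose, ← transpose_mul, hJV, transpose_zero,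
      Matrix.mul_zero]
  have hVV : V * Vᵀ * V * Vᵀ = V * Vᵀ := by
    rw [Matrix.mul_assoc V Vᵀ V, hV2, Matrix.mul_one]
  suffices 1 - onesProj ι - V * Vᵀ = 0 from (sub_eq_zero.mp this).symm
  apply eq_zero_of_transpose_eq_of_mul_self_eq_of_trace_eq_zero
  · simp [transpose_sub, onesProj_transpose]
  · simp only [Matrix.sub_mul, Matrix.mul_sub, Matrix.one_mul, Matrix.mul_one, onesProj_mul_self,
      hVV, hVVJ, ← Matrix.mul_assoc, hJV, Matrix.zero_mul]
    abel
  · rw [trace_sub, trace_sub, trace_mul_comm, hV2, trace_one, trace_one, trace_onesProj]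
    push_cast [← hcard]
    ring

section Parametrization

variable {ι κ : Type*} [Fintype ι] [Fintype κ]
  {V : Matrix ι κ ℝ} {P : Matrix ι ι ℝ} {Q : Matrix κ κ ℝ}

theorem transpose_mul_self_compress_eq_one [DecidableEq ι] [DecidableEq κ]
    (hV1 : 1 ᵥ* V = 0) (hV2 : Vᵀ * V = 1) (hVV : V * Vᵀ = 1 - onesProj ι)
    (hP : Pᵀ * P = 1) (hcol : 1 ᵥ* P = 1) :
    (Vᵀ * P * V)ᵀ * (Vᵀ * P * V) = 1 := by
  have hJPV : onesProj ι * (P * V) = 0 := by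
    rw [← Matrix.mul_assoc, onesProj_mul_eq_self hcol, onesProj_mul_eq_zero hV1]
  calc (Vᵀ * P * V)ᵀ * (Vᵀ * P * V) = Vᵀ * (Pᵀ * ((V * Vᵀ) * (P * V))) := by
        simp only [transpose_mul, transpose_transpose, Matrix.mul_assoc]
    _ = Vᵀ * (Pᵀ * P) * V := by
        rw [hVV, Matrix.sub_mul, hJPV, sub_zero, Matrix.one_mul]
        simp only [Matrix.mul_assoc]
    _ = 1 := by rw [hP, Matrix.mul_one, hV2]

theorem eq_onesProj_add_compress [DecidableEq ι] (hVV : V * Vᵀ = 1 - onesProj ι)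
    (hrow : P *ᵥ 1 = 1) (hcol : 1 ᵥ* P = 1) : P = onesProj ι + V * (Vᵀ * P * V) * Vᵀ := by
  have : V * (Vᵀ * P * V) * Vᵀ = (V * Vᵀ) * P * (V * Vᵀ) := by simp only [Matrix.mul_assoc]
  rw [this, hVV, Matrix.sub_mul, Matrix.one_mul, onesProj_mul_eq_self hcol, Matrix.sub_mul,
    Matrix.mul_sub, Matrix.mul_sub, Matrix.mul_one, Matrix.mul_one, mul_onesProj_eq_self hrow,
    onesProj_mul_self]
  abel

theorem transpose_mul_self_onesProj_add [DecidableEq ι] [DecidableEq κ]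
    (hV1 : 1 ᵥ* V = 0) (hV2 : Vᵀ * V = 1) (hVV : V * Vᵀ = 1 - onesProj ι) (hQ : Qᵀ * Q = 1) :
    (onesProj ι + V * Q * Vᵀ)ᵀ * (onesProj ι + V * Q * Vᵀ) = 1 := by
  have hJV : onesProj ι * V = 0 := onesProj_mul_eq_zero hV1
  have hVJ : Vᵀ * onesProj ι = 0 := by
    rw [← onesProj_transpose, ← transpose_mul, hJV, transpose_zero]
  have hQQ : V * Qᵀ * Vᵀ * (V * Q * Vᵀ) = V * Vᵀ := by
    calc V * Qᵀ * Vᵀ * (V * Q * Vᵀ) = V * (Qᵀ * ((Vᵀ * V) * (Q * Vᵀ))) := by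
          simp only [Matrix.mul_assoc]
      _ = V * Vᵀ := by rw [hV2, Matrix.one_mul, ← Matrix.mul_assoc Qᵀ, hQ, Matrix.one_mul]
  rw [transpose_add, onesProj_transpose, transpose_mul, transpose_mul, transpose_transpose,
    Matrix.add_mul, Matrix.mul_add, Matrix.mul_add, onesProj_mul_self, ← Matrix.mul_assoc,
    ← Matrix.mul_assoc, hJV, Matrix.zero_mul, Matrix.zero_mul, ← Matrix.mul_assoc,
    Matrix.mul_assoc _ Vᵀ, hVJ, Matrix.mul_zero, hQQ, hVV]
  abel

theorem onesProj_add_mulVec_one (hV1 : 1 ᵥ* V = 0) : (onesProj ι + V * Q * Vᵀ) *ᵥ 1 = 1 := by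
  rw [add_mulVec, ← mulVec_mulVec, mulVec_transpose, hV1, mulVec_zero, add_zero,
    onesProj_mulVec_one]

theorem one_vecMul_onesProj_add (hV1 : 1 ᵥ* V = 0) : 1 ᵥ* (onesProj ι + V * Q * Vᵀ) = 1 := by
  rw [vecMul_add, ← vecMul_vecMul, ← vecMul_vecMul, hV1, zero_vecMul, zero_vecMul, add_zero,
    one_vecMul_onesProj]

end Parametrization

theorem orth_doubly_stochastic_param (n : ℕ) (hn : 2 ≤ n)
    (V : Matrix (Fin n) (Fin (n - 1)) ℝ)
    (hV1 : Vᵀ *ᵥ (fun _ => (1 : ℝ)) = 0) (hV2 : Vᵀ * V = 1)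
    (P : Matrix (Fin n) (Fin n) ℝ) :
    (Pᵀ * P = 1 ∧ (P *ᵥ (fun _ => (1 : ℝ)) = fun _ => 1)
        ∧ (Pᵀ *ᵥ (fun _ => (1 : ℝ)) = fun _ => 1)) ↔
      ∃ Q : Matrix (Fin (n - 1)) (Fin (n - 1)) ℝ, Qᵀ * Q = 1 ∧
        P = Matrix.of (fun _ _ => 1 / (n : ℝ)) + V * Q * Vᵀ := by
  have hJ : Matrix.of (fun _ _ => 1 / (n : ℝ)) = onesProj (Fin n) := by
    ext
    simp [onesProj]
  rw [← Pi.one_def, mulVec_transpose] at hV1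
  have hVV := mul_transpose_eq_one_sub_onesProj hV1 hV2 (by simp only [Fintype.card_fin]; omega)
  simp only [← Pi.one_def, mulVec_transpose, hJ]
  constructor
  · rintro ⟨hP, hrow, hcol⟩
    exact ⟨Vᵀ * P * V, transpose_mul_self_compress_eq_one hV1 hV2 hVV hP hcol,
      eq_onesProj_add_compress hVV hrow hcol⟩
  · rintro ⟨Q, hQ, rfl⟩
    exact ⟨transpose_mul_self_onesProj_add hV1 hV2 hVV hQ, onesProj_add_mulVec_one hV1,
      one_vecMul_onesProj_add hV1⟩
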